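/- arXiv:1807.08338 — 2 statements merged into one kernel-verified Lean document; each statement's English description precedes it below -/
import Mathlib

section
/- The reduced MMH slow equation ṡ = −(1 + 1/σ)·s/(s + 1/σ) with σ > 0 and initial condition s(0) = 1 has a strictly decreasing solution s(t) > 0 for all t ≥ 0, which satisfies the implicit (Michaelis–Menten) relation σ·s(t) + log(σ·s(t)) = σ + log σ − (1+σ)t for all t ≥ 0. -/
/-!
Substituting `s = exp v` turns the implicit relation (after cancelling `log σ`) into
`σ exp v + v = σ - (1 + σ) t`. The map `v ↦ σ exp v + v` is a strictly increasing continuous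
bijection of `ℝ`, so `v` is the value of its inverse at the affine, strictly decreasing function
`σ - (1 + σ) t`; the inverse function theorem then gives the ODE.
-/

open Real Filter Topology

namespace MichaelisMenten

variable {σ : ℝ}

lemma strictMono_mul_exp_add (hσ : 0 ≤ σ) : StrictMono fun v => σ * exp v + v :=
  (exp_monotone.const_mul hσ).add_strictMono strictMono_id

lemma surjective_mul_exp_add (hσ : 0 ≤ σ) : Function.Surjective fun v => σ * exp v + v := by
  refine Continuous.surjective (by fun_prop) ?_ ?_
  · exact tendsto_atTop_add_left_of_le _ 0 (fun v => by positivity) tendsto_id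
  · have h : Tendsto (fun v => σ * exp v) atBot (𝓝 0) := by
      simpa using tendsto_exp_atBot.const_mul σ
    exact h.add_atBot tendsto_id

noncomputable def mulExpAddOrderIso (hσ : 0 ≤ σ) : ℝ ≃o ℝ :=
  (strictMono_mul_exp_add hσ).orderIsoOfSurjective _ (surjective_mul_exp_add hσ)

@[simp]
lemma mulExpAddOrderIso_apply (hσ : 0 ≤ σ) (v : ℝ) :
    mulExpAddOrderIso hσ v = σ * exp v + v :=
  rfl

lemma hasDerivAt_mulExpAddOrderIso_symm (hσ : 0 ≤ σ) (y : ℝ) :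
    HasDerivAt (mulExpAddOrderIso hσ).symm
      (σ * exp ((mulExpAddOrderIso hσ).symm y) + 1)⁻¹ y := by
  set e := mulExpAddOrderIso hσ
  have hderiv : HasDerivAt e (σ * exp (e.symm y) + 1) (e.symm y) :=
    ((hasDerivAt_exp _).const_mul σ).add (hasDerivAt_id' _)
  exact hderiv.of_local_left_inverse e.symm.continuous.continuousAt (by positivity)
    (Eventually.of_forall e.apply_symm_apply)

noncomputable def slowSolution (hσ : 0 ≤ σ) (t : ℝ) : ℝ :=
  exp ((mulExpAddOrderIso hσ).symm (σ - (1 + σ) * t))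

lemma slowSolution_pos (hσ : 0 ≤ σ) (t : ℝ) : 0 < slowSolution hσ t :=
  exp_pos _

lemma slowSolution_zero (hσ : 0 ≤ σ) : slowSolution hσ 0 = 1 := by
  have h : (mulExpAddOrderIso hσ).symm σ = 0 :=
    (mulExpAddOrderIso hσ).symm_apply_eq.2 (by simp)
  rw [slowSolution, mul_zero, sub_zero, h, exp_zero]

lemma strictAnti_slowSolution (hσ : 0 ≤ σ) : StrictAnti (slowSolution hσ) := fun a b hab =>
  exp_lt_exp.2 <| (mulExpAddOrderIso hσ).symm.strictMono <| by nlinarith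

lemma mul_slowSolution_add_log (hσ : 0 < σ) (t : ℝ) :
    σ * slowSolution hσ.le t + log (σ * slowSolution hσ.le t) = σ + log σ - (1 + σ) * t := by
  have h := (mulExpAddOrderIso hσ.le).apply_symm_apply (σ - (1 + σ) * t)
  rw [mulExpAddOrderIso_apply] at h
  rw [slowSolution, log_mul hσ.ne' (exp_pos _).ne', log_exp]
  linarith

lemma hasDerivAt_slowSolution (hσ : 0 ≤ σ) (t : ℝ) :
    HasDerivAt (slowSolution hσ)
      (-(1 + σ) * slowSolution hσ t / (σ * slowSolution hσ t + 1)) t := by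
  have hlin : HasDerivAt (fun t => σ - (1 + σ) * t) (-(1 + σ)) t := by
    simpa using ((hasDerivAt_id t).const_mul (1 + σ)).const_sub σ
  refine ((hasDerivAt_exp _).comp t
    ((hasDerivAt_mulExpAddOrderIso_symm hσ _).comp t hlin)).congr_deriv ?_
  rw [slowSolution, Function.comp_apply]
  field_simp

end MichaelisMenten

open MichaelisMenten in
theorem stmt15 (σ : ℝ) (hσ : 0 < σ) :
    ∃ s : ℝ → ℝ, s 0 = 1 ∧
      (∀ t : ℝ, 0 ≤ t → 0 < s t) ∧
      (∀ t : ℝ, 0 ≤ t → HasDerivAt s (-(1 + 1 / σ) * s t / (s t + 1 / σ)) t) ∧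
      StrictAntiOn s (Set.Ici 0) ∧
      (∀ t : ℝ, 0 ≤ t →
        σ * s t + Real.log (σ * s t) = σ + Real.log σ - (1 + σ) * t) := by
  refine ⟨slowSolution hσ.le, slowSolution_zero hσ.le, fun t _ => slowSolution_pos hσ.le t,
    fun t _ => ?_, (strictAnti_slowSolution hσ.le).strictAntiOn _,
    fun t _ => mul_slowSolution_add_log hσ t⟩
  convert hasDerivAt_slowSolution hσ.le t using 1
  have := slowSolution_pos hσ.le t
  field_simp
  ring
end

section
/- The isothermal effectiveness factor η(Φ) = (3/Φ)·(coth(Φ) − 1/Φ) is strictly decreasing on (0,∞), satisfies 0 < η(Φ) < 1 for all Φ > 0, η(Φ) → 1 as Φ → 0⁺, and Φ·η(Φ) → 3 as Φ → ∞ (so η(Φ) ~ 3/Φ). -/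
/-!
Write η(Φ) = 3 (Φ cosh Φ - sinh Φ) / (Φ² sinh Φ). Then 0 < η < 1, the lower bound
η > 1 / cosh Φ and the sign of η' all reduce to inequalities between Φ, cosh Φ and sinh Φ on
(0, ∞). The difference of the two sides of each vanishes at 0 and has a derivative whose
positivity is an earlier inequality of the chain, which starts from Φ cosh Φ > sinh Φ. The limit
at 0 follows by squeezing η between 1 / cosh Φ and 1, and the one at ∞ from
Φ η(Φ) = 3 (coth Φ - 1 / Φ) and coth Φ → 1.
-/

open Real Filter Set Topology

noncomputable def effectivenessFactor (Φ : ℝ) : ℝ := 3 / Φ * (cosh Φ / sinh Φ - 1 / Φ)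

lemma lt_of_hasDerivAt_of_pos {f f' : ℝ → ℝ} {a b : ℝ} (hf : ∀ x, HasDerivAt f (f' x) x)
    (hf' : ∀ x, a < x → 0 < f' x) (hab : a < b) : f a < f b :=
  strictMonoOn_of_hasDerivWithinAt_pos (convex_Ici a)
    (fun x _ => (hf x).continuousAt.continuousWithinAt)
    (fun x _ => (hf x).hasDerivWithinAt)
    (fun x hx => hf' x (by rwa [interior_Ici] at hx)) self_mem_Ici hab.le hab

section HyperbolicInequalities

variable {x : ℝ}

lemma sinh_lt_mul_cosh (hx : 0 < x) : sinh x < x * cosh x := by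
  have hderiv (y : ℝ) : HasDerivAt (fun y => y * cosh y - sinh y) (y * sinh y) y :=
    (((hasDerivAt_id' y).mul (hasDerivAt_cosh y)).sub (hasDerivAt_sinh y)).congr_deriv (by ring)
  simpa using lt_of_hasDerivAt_of_pos hderiv (fun y hy => mul_pos hy (sinh_pos_iff.2 hy)) hx

lemma pow_three_lt_three_mul_mul_cosh_sub_sinh (hx : 0 < x) :
    x ^ 3 < 3 * (x * cosh x - sinh x) := by
  have hderiv (y : ℝ) :
      HasDerivAt (fun y => 3 * (y * cosh y - sinh y) - y ^ 3) (3 * y * (sinh y - y)) y :=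
    ((((hasDerivAt_id' y).mul (hasDerivAt_cosh y)).sub (hasDerivAt_sinh y)).const_mul 3).sub
      (hasDerivAt_pow 3 y) |>.congr_deriv (by push_cast; ring)
  simpa using lt_of_hasDerivAt_of_pos hderiv
    (fun y hy => mul_pos (by positivity) (sub_pos.2 (self_lt_sinh_iff.2 hy))) hx

lemma three_mul_mul_cosh_sub_sinh_lt (hx : 0 < x) :
    3 * (x * cosh x - sinh x) < x ^ 2 * sinh x := by
  have hderiv (y : ℝ) : HasDerivAt (fun y => y ^ 2 * sinh y - 3 * (y * cosh y - sinh y))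
      (y * (y * cosh y - sinh y)) y :=
    ((hasDerivAt_pow 2 y).mul (hasDerivAt_sinh y)).sub
      ((((hasDerivAt_id' y).mul (hasDerivAt_cosh y)).sub (hasDerivAt_sinh y)).const_mul 3)
      |>.congr_deriv (by push_cast; ring)
  simpa using lt_of_hasDerivAt_of_pos hderiv
    (fun y hy => mul_pos hy (sub_pos.2 (sinh_lt_mul_cosh hy))) hx

lemma three_mul_sinh_mul_cosh_lt (hx : 0 < x) :
    3 * (sinh x * cosh x) < 3 * x + 2 * x * sinh x ^ 2 := by
  have hderiv (y : ℝ) : HasDerivAt (fun y => 3 * y + 2 * y * sinh y ^ 2 - 3 * (sinh y * cosh y))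
      (4 * sinh y * (y * cosh y - sinh y)) y :=
    ((((hasDerivAt_id' y).const_mul 3).add
      (((hasDerivAt_id' y).const_mul 2).mul ((hasDerivAt_sinh y).pow 2))).sub
      (((hasDerivAt_sinh y).mul (hasDerivAt_cosh y)).const_mul 3)).congr_deriv <| by
        simp only [Pi.pow_apply]
        push_cast
        linear_combination (-3) * cosh_sq' y
  simpa using lt_of_hasDerivAt_of_pos hderiv (fun y hy =>
    mul_pos (mul_pos four_pos (sinh_pos_iff.2 hy)) (sub_pos.2 (sinh_lt_mul_cosh hy))) hx

lemma two_mul_sinh_sq_lt (hx : 0 < x) :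
    2 * sinh x ^ 2 < x ^ 2 + x * sinh x * cosh x := by
  have hderiv (y : ℝ) : HasDerivAt (fun y => y ^ 2 + y * sinh y * cosh y - 2 * sinh y ^ 2)
      (3 * y + 2 * y * sinh y ^ 2 - 3 * (sinh y * cosh y)) y :=
    (((hasDerivAt_pow 2 y).add
      (((hasDerivAt_id' y).mul (hasDerivAt_sinh y)).mul (hasDerivAt_cosh y))).sub
      (((hasDerivAt_sinh y).pow 2).const_mul 2)).congr_deriv <| by
        simp only [Pi.mul_apply]
        push_cast
        linear_combination y * cosh_sq' y
  simpa using lt_of_hasDerivAt_of_pos hderiv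
    (fun y hy => sub_pos.2 (three_mul_sinh_mul_cosh_lt hy)) hx

end HyperbolicInequalities

lemma effectivenessFactor_eq {x : ℝ} (hx : x ≠ 0) :
    effectivenessFactor x = 3 * (x * cosh x - sinh x) / (x ^ 2 * sinh x) := by
  have hs : sinh x ≠ 0 := sinh_ne_zero.2 hx
  rw [effectivenessFactor]
  field_simp

lemma hasDerivAt_effectivenessFactor {x : ℝ} (hx : x ≠ 0) :
    HasDerivAt effectivenessFactor
      (-3 * (x ^ 2 + x * sinh x * cosh x - 2 * sinh x ^ 2) / (x ^ 3 * sinh x ^ 2)) x := by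
  have hs : sinh x ≠ 0 := sinh_ne_zero.2 hx
  have h := ((hasDerivAt_const x (3 : ℝ)).div (hasDerivAt_id' x) hx).mul
    (((hasDerivAt_cosh x).div (hasDerivAt_sinh x) hs).sub
      ((hasDerivAt_const x (1 : ℝ)).div (hasDerivAt_id' x) hx))
  refine h.congr_deriv ?_
  simp only [Pi.div_apply, Pi.sub_apply]
  field_simp
  linear_combination (-3 * x ^ 2) * cosh_sq' x

lemma effectivenessFactor_pos {x : ℝ} (hx : 0 < x) : 0 < effectivenessFactor x := by
  have := sinh_pos_iff.2 hx
  rw [effectivenessFactor_eq hx.ne']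
  exact div_pos (mul_pos three_pos (sub_pos.2 (sinh_lt_mul_cosh hx))) (by positivity)

lemma effectivenessFactor_lt_one {x : ℝ} (hx : 0 < x) : effectivenessFactor x < 1 := by
  have := sinh_pos_iff.2 hx
  rw [effectivenessFactor_eq hx.ne', div_lt_one (by positivity)]
  exact three_mul_mul_cosh_sub_sinh_lt hx

lemma inv_cosh_lt_effectivenessFactor {x : ℝ} (hx : 0 < x) :
    (cosh x)⁻¹ < effectivenessFactor x := by
  have := sinh_pos_iff.2 hx
  rw [effectivenessFactor_eq hx.ne', ← one_div, div_lt_div_iff₀ (cosh_pos x) (by positivity)]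
  calc 1 * (x ^ 2 * sinh x) < x ^ 2 * (x * cosh x) := by
        rw [one_mul]; exact mul_lt_mul_of_pos_left (sinh_lt_mul_cosh hx) (by positivity)
    _ = x ^ 3 * cosh x := by ring
    _ < 3 * (x * cosh x - sinh x) * cosh x :=
        mul_lt_mul_of_pos_right (pow_three_lt_three_mul_mul_cosh_sub_sinh hx) (cosh_pos x)

lemma strictAntiOn_effectivenessFactor : StrictAntiOn effectivenessFactor (Ioi 0) := by
  refine strictAntiOn_of_hasDerivWithinAt_neg (convex_Ioi 0)
    (fun x hx => (hasDerivAt_effectivenessFactor (ne_of_gt hx)).continuousAt.continuousWithinAt)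
    (fun x hx => (hasDerivAt_effectivenessFactor (ne_of_gt (interior_subset hx))).hasDerivWithinAt)
    (fun x hx => ?_)
  rw [interior_Ioi, mem_Ioi] at hx
  have := sinh_pos_iff.2 hx
  have := two_mul_sinh_sq_lt hx
  exact div_neg_of_neg_of_pos (by linarith) (by positivity)

lemma tendsto_effectivenessFactor_nhdsGT_zero :
    Tendsto effectivenessFactor (𝓝[>] 0) (𝓝 1) := by
  have hcosh : Tendsto (fun x => (cosh x)⁻¹) (𝓝[>] 0) (𝓝 1) := by
    simpa using (continuous_cosh.tendsto 0).inv₀ (cosh_pos 0).ne' |>.mono_left nhdsWithin_le_nhds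
  refine tendsto_of_tendsto_of_tendsto_of_le_of_le' hcosh tendsto_const_nhds ?_ ?_
  · filter_upwards [self_mem_nhdsWithin] with x hx
    exact (inv_cosh_lt_effectivenessFactor hx).le
  · filter_upwards [self_mem_nhdsWithin] with x hx
    exact (effectivenessFactor_lt_one hx).le

lemma tendsto_cosh_div_sinh_atTop : Tendsto (fun x => cosh x / sinh x) atTop (𝓝 1) := by
  have hsinh : Tendsto sinh atTop atTop :=
    tendsto_atTop_mono' atTop ((eventually_ge_atTop 0).mono fun x => self_le_sinh_iff.2)
      tendsto_id
  have h := (tendsto_exp_neg_atTop_nhds_zero.div_atTop hsinh).const_add 1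
  rw [add_zero] at h
  refine h.congr' ?_
  filter_upwards [eventually_gt_atTop 0] with x hx
  have := sinh_pos_iff.2 hx
  rw [← cosh_sub_sinh]
  field_simp
  ring

lemma tendsto_mul_effectivenessFactor_atTop :
    Tendsto (fun x => x * effectivenessFactor x) atTop (𝓝 3) := by
  have h := (tendsto_cosh_div_sinh_atTop.sub tendsto_inv_atTop_zero).const_mul 3
  rw [sub_zero, mul_one] at h
  refine h.congr' ?_
  filter_upwards [eventually_gt_atTop 0] with x hx
  rw [effectivenessFactor]
  field_simp

theorem stmt17 :
    let η : ℝ → ℝ := fun Φ => (3 / Φ) * (Real.cosh Φ / Real.sinh Φ - 1 / Φ)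
    StrictAntiOn η (Set.Ioi 0) ∧
    (∀ Φ : ℝ, 0 < Φ → 0 < η Φ ∧ η Φ < 1) ∧
    Filter.Tendsto η (nhdsWithin 0 (Set.Ioi 0)) (nhds 1) ∧
    Filter.Tendsto (fun Φ => Φ * η Φ) Filter.atTop (nhds 3) := by
  intro η
  exact ⟨strictAntiOn_effectivenessFactor,
    fun Φ hΦ => ⟨effectivenessFactor_pos hΦ, effectivenessFactor_lt_one hΦ⟩,
    tendsto_effectivenessFactor_nhdsGT_zero, tendsto_mul_effectivenessFactor_atTop⟩
end
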